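/- Let X be a finite pure n-dimensional weighted simplicial complex. For every 0 ≤ k ≤ n−1, every φ, ψ ∈ C^k(X,ℝ), and every 0 ≤ l ≤ n−k−1: ⟨φ, ψ⟩ = Σ_{τ ∈ Σ(l)} ⟨φ^τ, ψ^τ⟩, where the inner products on the right-hand side are taken in the links X_τ. -/

import Mathlib

open Finset

variable {V : Type} [Fintype V] [DecidableEq V]

/-- A finite abstract simplicial complex on the vertex type `V`. -/
structure SComplex (V : Type) [Fintype V] [DecidableEq V] where
  faces : Finset (Finset V)
  empty_mem : ∅ ∈ faces
  down_closed : ∀ s ∈ faces, ∀ t, t ⊆ s → t ∈ faces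

namespace SComplex

/-- `X` is pure `n`-dimensional: every face is contained in an `n`-dimensional face. -/
def Pure (X : SComplex V) (n : ℕ) : Prop :=
  (∀ s ∈ X.faces, s.card ≤ n + 1) ∧
    ∀ s ∈ X.faces, ∃ t ∈ X.faces, s ⊆ t ∧ t.card = n + 1

/-- `σ` is an ordered simplex with `j` vertices (an element of `Σ(j-1)`). -/
def IsOSimp (X : SComplex V) {j : ℕ} (σ : Fin j → V) : Prop :=
  Function.Injective σ ∧ Finset.image σ Finset.univ ∈ X.faces

instance {j : ℕ} (X : SComplex V) (σ : Fin j → V) : Decidable (X.IsOSimp σ) := by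
  unfold IsOSimp; infer_instance

/-- A balanced, strictly positive weight function on the simplices of `X`. -/
def IsBalanced (X : SComplex V) (n : ℕ) (m : Finset V → ℝ) : Prop :=
  (∀ s ∈ X.faces, 0 < m s) ∧
    ∀ s ∈ X.faces, s.card ≤ n →
      m s = ∑ t ∈ X.faces.filter fun t => s ⊆ t ∧ t.card = s.card + 1, m t

/-- The weight of an ordered tuple (zero off the ordered simplices). -/
noncomputable def wt (X : SComplex V) (m : Finset V → ℝ) {j : ℕ} (σ : Fin j → V) : ℝ :=
  if X.IsOSimp σ then m (Finset.image σ Finset.univ) else 0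

/-- `φ` is a `j`-vertex form, i.e. an element of `C^{j-1}(X,ℝ)`:
antisymmetric and supported on the ordered simplices. -/
def IsForm (X : SComplex V) (j : ℕ) (φ : (Fin j → V) → ℝ) : Prop :=
  (∀ (σ : Fin j → V) (π : Equiv.Perm (Fin j)),
      φ (σ ∘ π) = ((Equiv.Perm.sign π : ℤ) : ℝ) * φ σ) ∧
    ∀ σ : Fin j → V, ¬X.IsOSimp σ → φ σ = 0

/-- The inner product on `j`-vertex forms (`C^{j-1}(X,ℝ)`). -/
noncomputable def innerF (X : SComplex V) (m : Finset V → ℝ) (j : ℕ)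
    (φ ψ : (Fin j → V) → ℝ) : ℝ :=
  ∑ σ : Fin j → V, X.wt m σ / (Nat.factorial j : ℝ) * (φ σ * ψ σ)

/-- The sum of a quantity over all ordered simplices with `j` vertices. -/
noncomputable def sumOSimp (X : SComplex V) (j : ℕ) (F : (Fin j → V) → ℝ) : ℝ :=
  ∑ σ : Fin j → V, if X.IsOSimp σ then F σ else 0

/-- The simplicial differential `d`. -/
def dOp {j : ℕ} (φ : (Fin j → V) → ℝ) : (Fin (j + 1) → V) → ℝ :=
  fun σ => ∑ i : Fin (j + 1), (-1 : ℝ) ^ (i : ℕ) * φ (σ ∘ i.succAbove)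

/-- The codifferential `δ` (the adjoint of `d`). -/
noncomputable def deltaOp (X : SComplex V) (m : Finset V → ℝ) {j : ℕ}
    (φ : (Fin (j + 1) → V) → ℝ) : (Fin j → V) → ℝ :=
  fun τ => ∑ v : V, X.wt m (Fin.cons v τ) / X.wt m τ * φ (Fin.cons v τ)

/-- The upper Laplacian `Δ⁺` on `j`-vertex forms (`C^{j-1}`). -/
noncomputable def lapPlus (X : SComplex V) (m : Finset V → ℝ) (j : ℕ)
    (φ : (Fin j → V) → ℝ) : (Fin j → V) → ℝ :=
  X.deltaOp m (dOp φ)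

/-- The lower Laplacian `Δ⁻` on `(j+1)`-vertex forms (`C^j`). -/
noncomputable def lapMinus (X : SComplex V) (m : Finset V → ℝ) (j : ℕ)
    (φ : (Fin (j + 1) → V) → ℝ) : (Fin (j + 1) → V) → ℝ :=
  dOp (X.deltaOp m φ)

/-- The set of eigenvalues of `Δ⁺` on `j`-vertex forms. -/
def specLapPlus (X : SComplex V) (m : Finset V → ℝ) (j : ℕ) : Set ℝ :=
  {μ | ∃ φ : (Fin j → V) → ℝ, X.IsForm j φ ∧ φ ≠ 0 ∧ X.lapPlus m j φ = μ • φ}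

/-- The set of eigenvalues of `Δ⁻` on `(j+1)`-vertex forms (`C^j`). -/
def specLapMinus (X : SComplex V) (m : Finset V → ℝ) (j : ℕ) : Set ℝ :=
  {μ | ∃ φ : (Fin (j + 1) → V) → ℝ, X.IsForm (j + 1) φ ∧ φ ≠ 0 ∧ X.lapMinus m j φ = μ • φ}

/-- The link of a face `s`. -/
def link (X : SComplex V) (s : Finset V) : SComplex V where
  faces := insert ∅ (X.faces.filter fun t => Disjoint s t ∧ s ∪ t ∈ X.faces)
  empty_mem := Finset.mem_insert_self _ _
  down_closed := by
    intro a ha t hts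
    rcases Finset.mem_insert.mp ha with h | h
    · refine Finset.mem_insert.mpr (Or.inl ?_)
      subst h; exact Finset.subset_empty.mp hts
    · rw [Finset.mem_filter] at h
      refine Finset.mem_insert.mpr (Or.inr (Finset.mem_filter.mpr
        ⟨X.down_closed a h.1 t hts, Disjoint.mono_right hts h.2.1,
          X.down_closed _ h.2.2 _ (Finset.union_subset_union (Finset.Subset.refl s) hts)⟩))

/-- The induced (balanced) weight on the link of `s`. -/
def linkWt (m : Finset V → ℝ) (s : Finset V) : Finset V → ℝ := fun t => m (s ∪ t)

/-- The graph given by the 1-skeleton of `X`. -/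
def skeleton (X : SComplex V) : SimpleGraph V where
  Adj u v := u ≠ v ∧ ({u, v} : Finset V) ∈ X.faces
  symm := ⟨by
    intro u v h
    exact ⟨h.1.symm, by rw [Finset.pair_comm]; exact h.2⟩⟩
  loopless := ⟨fun u h => h.1 rfl⟩

/-- The 1-skeleton of `X` is connected (on the vertices of `X`). -/
def SkelConnected (X : SComplex V) : Prop :=
  ∀ u v : V, ({u} : Finset V) ∈ X.faces → ({v} : Finset V) ∈ X.faces →
    X.skeleton.Reachable u v

/-- The 1-skeleton of `X` and the 1-skeletons of all links of `X` of dimension `> 0`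
are connected. -/
def AllLinksConnected (X : SComplex V) (n : ℕ) : Prop :=
  X.SkelConnected ∧ ∀ s ∈ X.faces, s.card < n → (X.link s).SkelConnected

/-- The localization `φ_τ ∈ C⁰(X_τ)` of a `(k+1)`-vertex form `φ` at an ordered
`k`-vertex simplex `τ`. -/
def localize {k : ℕ} (φ : (Fin (k + 1) → V) → ℝ) (τ : Fin k → V) : (Fin 1 → V) → ℝ :=
  fun σ => φ (Fin.append τ σ)

/-- The restriction of a cochain to the subcomplex `Y` (truncating off `Y`). -/
def restrict (Y : SComplex V) {j : ℕ} (φ : (Fin j → V) → ℝ) : (Fin j → V) → ℝ :=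
  fun σ => if Y.IsOSimp σ then φ σ else 0

/-- `S` is an `(n+1)`-partition of `X`: the vertices of `X` are partitioned into the
sides `S i`, and every edge joins two distinct sides. -/
def IsPartition (X : SComplex V) (n : ℕ) (S : Fin (n + 1) → Finset V) : Prop :=
  (∀ i, ∀ v ∈ S i, ({v} : Finset V) ∈ X.faces) ∧
    (∀ v : V, ({v} : Finset V) ∈ X.faces → ∃! i, v ∈ S i) ∧
    ∀ u v : V, u ≠ v → ({u, v} : Finset V) ∈ X.faces → ∀ i, u ∈ S i → v ∉ S i

/-- The side differential `d_{(k,j)}` with respect to the side `S`. -/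
def dSide (S : Finset V) {j : ℕ} (φ : (Fin j → V) → ℝ) : (Fin (j + 1) → V) → ℝ :=
  fun σ => ∑ i : Fin (j + 1),
    if σ i ∈ S then (-1 : ℝ) ^ (i : ℕ) * φ (σ ∘ i.succAbove) else 0

/-- The adjoint `δ_{(k,j)}` of the side differential. -/
noncomputable def deltaSide (X : SComplex V) (m : Finset V → ℝ) (S : Finset V) {j : ℕ}
    (φ : (Fin (j + 1) → V) → ℝ) : (Fin j → V) → ℝ :=
  fun τ => ∑ v ∈ S, X.wt m (Fin.cons v τ) / X.wt m τ * φ (Fin.cons v τ)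

/-- The side lower Laplacian `Δ⁻_{(k,j)}` on `(j+1)`-vertex forms (`C^j`). -/
noncomputable def lapMinusSide (X : SComplex V) (m : Finset V → ℝ) (S : Finset V) (j : ℕ)
    (φ : (Fin (j + 1) → V) → ℝ) : (Fin (j + 1) → V) → ℝ :=
  dSide S (X.deltaSide m S φ)

end SComplex

open SComplex

/-! Balance propagates to links: `m s` is the total link weight `m (s ∪ τ)` of the ordered
simplices `τ` of the link of `s` with `j` vertices, as long as `#s + j ≤ n + 1` (peel off the
first vertex of `τ` and apply balance once). For `s = σ` this splits the weight of each
`k`-simplex `σ` over the ordered `l`-simplices `τ` having `σ` in their link, and exchanging the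
sums over `σ` and `τ` gives the formula. -/

namespace SComplex

variable {X : SComplex V} {m : Finset V → ℝ} {n : ℕ} {s : Finset V}

theorem mem_link_faces (hs : s ∈ X.faces) {t : Finset V} :
    t ∈ (X.link s).faces ↔ Disjoint s t ∧ s ∪ t ∈ X.faces := by
  rw [link, mem_insert, mem_filter]
  constructor
  · rintro (rfl | ⟨-, h⟩)
    · simpa using hs
    · exact h
  · exact fun h => Or.inr ⟨X.down_closed _ h.2 t subset_union_right, h⟩

theorem isOSimp_link_iff (hs : s ∈ X.faces) {j : ℕ} (τ : Fin j → V) :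
    (X.link s).IsOSimp τ ↔ Function.Injective τ ∧ Disjoint s (image τ univ) ∧
      s ∪ image τ univ ∈ X.faces := by
  rw [IsOSimp, mem_link_faces hs]

theorem isOSimp_and_isOSimp_link_iff {i j : ℕ} (σ : Fin i → V) (τ : Fin j → V) :
    X.IsOSimp σ ∧ (X.link (image σ univ)).IsOSimp τ ↔
      Function.Injective σ ∧ Function.Injective τ ∧ Disjoint (image σ univ) (image τ univ) ∧
        image σ univ ∪ image τ univ ∈ X.faces := by
  constructor
  · rintro ⟨hσ, hτ⟩
    rw [isOSimp_link_iff hσ.2] at hτ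
    exact ⟨hσ.1, hτ⟩
  · rintro ⟨hσ, hτ, hdisj, hunion⟩
    have hσ' : X.IsOSimp σ := ⟨hσ, X.down_closed _ hunion _ subset_union_left⟩
    exact ⟨hσ', (isOSimp_link_iff hσ'.2 τ).2 ⟨hτ, hdisj, hunion⟩⟩

theorem isOSimp_and_isOSimp_link_comm {i j : ℕ} (σ : Fin i → V) (τ : Fin j → V) :
    X.IsOSimp σ ∧ (X.link (image σ univ)).IsOSimp τ ↔
      X.IsOSimp τ ∧ (X.link (image τ univ)).IsOSimp σ := by
  rw [isOSimp_and_isOSimp_link_iff, isOSimp_and_isOSimp_link_iff, disjoint_comm, union_comm]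
  tauto

theorem image_univ_cons {α : Type*} [DecidableEq α] {j : ℕ} (v : α) (ρ : Fin j → α) :
    image (Fin.cons v ρ : Fin (j + 1) → α) univ = insert v (image ρ univ) := by
  ext w
  simp [Fin.exists_fin_succ, eq_comm]

theorem isOSimp_link_cons_iff (hs : s ∈ X.faces) {j : ℕ} (v : V) (ρ : Fin j → V) :
    (X.link s).IsOSimp (Fin.cons v ρ : Fin (j + 1) → V) ↔
      (v ∉ s ∧ insert v s ∈ X.faces) ∧ (X.link (insert v s)).IsOSimp ρ := by
  by_cases hvs : insert v s ∈ X.faces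
  · rw [isOSimp_link_iff hs, isOSimp_link_iff hvs, image_univ_cons, Fin.cons_injective_iff,
      disjoint_insert_right, disjoint_insert_left, insert_union, union_insert]
    simp only [Set.mem_range, mem_image, mem_univ, true_and, hvs, and_true]
    tauto
  · refine iff_of_false (fun h => hvs ?_) (fun h => hvs h.1.2)
    refine X.down_closed _ ((isOSimp_link_iff hs _).1 h).2.2 _ ?_
    rw [image_univ_cons, union_insert]
    exact insert_subset_insert v subset_union_left

theorem IsBalanced.eq_sum_insert (hm : X.IsBalanced n m) (hs : s ∈ X.faces)
    (hcard : s.card ≤ n) :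
    m s = ∑ v, if v ∉ s ∧ insert v s ∈ X.faces then m (insert v s) else 0 := by
  rw [hm.2 s hs hcard, ← sum_filter,
    ← sum_image ((insert_inj_on s).mono fun v hv => (mem_filter.1 hv).2.1)]
  congr 1
  ext t
  simp only [mem_filter, mem_image, mem_univ, true_and]
  constructor
  · rintro ⟨ht, hst, hsucc⟩
    obtain ⟨a, ha, rfl⟩ := exists_eq_insert_iff.2 ⟨hst, hsucc.symm⟩
    exact ⟨a, ⟨ha, ht⟩, rfl⟩
  · rintro ⟨a, ⟨ha, ht⟩, rfl⟩
    exact ⟨ht, subset_insert a s, card_insert_of_notMem ha⟩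

theorem IsBalanced.eq_sumOSimp_link (hm : X.IsBalanced n m) :
    ∀ {j : ℕ} {s : Finset V}, s ∈ X.faces → s.card + j ≤ n + 1 →
      m s = (X.link s).sumOSimp j fun τ => linkWt m s (image τ univ)
  | 0, s, hs, _ => by
    rw [sumOSimp, Fintype.sum_unique,
      if_pos ⟨Function.injective_of_subsingleton _, by simpa using (X.link s).empty_mem⟩]
    simp [linkWt]
  | j + 1, s, hs, hcard => by
    rw [hm.eq_sum_insert hs (by omega), sumOSimp, ← (Fin.consEquiv fun _ => V).sum_comp,
      Fintype.sum_prod_type]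
    refine sum_congr rfl fun v _ => ?_
    simp only [Fin.consEquiv, Equiv.coe_fn_mk, isOSimp_link_cons_iff hs]
    by_cases hv : v ∉ s ∧ insert v s ∈ X.faces
    · simp_rw [if_pos hv, and_iff_right hv]
      rw [hm.eq_sumOSimp_link (j := j) hv.2 (by rw [card_insert_of_notMem hv.1]; omega), sumOSimp]
      simp only [linkWt, image_univ_cons, insert_union, union_insert]
    · simp [hv]

theorem IsBalanced.wt_eq_sumOSimp_link_wt (hm : X.IsBalanced n m) {i j : ℕ}
    (hij : i + j ≤ n + 1) (σ : Fin i → V) :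
    X.wt m σ = X.sumOSimp j fun τ => (X.link (image τ univ)).wt (linkWt m (image τ univ)) σ := by
  simp only [sumOSimp, wt, linkWt, ← ite_and]
  simp_rw [← isOSimp_and_isOSimp_link_comm σ]
  by_cases hσ : X.IsOSimp σ
  · have hcard : (image σ univ).card = i := by
      rw [card_image_of_injective _ hσ.1, card_univ, Fintype.card_fin]
    simp only [hσ, true_and, if_true]
    rw [hm.eq_sumOSimp_link (j := j) hσ.2 (by omega), sumOSimp]
    simp only [linkWt, union_comm]
  · simp [hσ]

theorem innerF_restrict (Y : SComplex V) (w : Finset V → ℝ) (j : ℕ) (φ ψ : (Fin j → V) → ℝ) :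
    Y.innerF w j (Y.restrict φ) (Y.restrict ψ) = Y.innerF w j φ ψ := by
  refine sum_congr rfl fun σ _ => ?_
  by_cases hσ : Y.IsOSimp σ <;> simp [wt, restrict, hσ]

end SComplex

theorem restriction_of_inner_product_general
    (X : SComplex V) (n : ℕ) (m : Finset V → ℝ)
    (hm : X.IsBalanced n m)
    (k : ℕ) (l : ℕ) (hl : k + l + 1 ≤ n)
    (φ ψ : (Fin (k + 1) → V) → ℝ) :
    X.innerF m (k + 1) φ ψ =
      X.sumOSimp (l + 1) fun τ =>
        (X.link (Finset.image τ Finset.univ)).innerF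
          (linkWt m (Finset.image τ Finset.univ)) (k + 1)
          ((X.link (Finset.image τ Finset.univ)).restrict φ)
          ((X.link (Finset.image τ Finset.univ)).restrict ψ) := by
  simp_rw [innerF_restrict]
  unfold innerF
  simp_rw [hm.wt_eq_sumOSimp_link_wt (i := k + 1) (j := l + 1) (by omega)]
  simp only [sumOSimp, ← sum_filter, sum_div, sum_mul]
  exact sum_comm

/-- Lemma 3.12: restriction of the inner product:
`⟨φ,ψ⟩ = ∑_{τ∈Σ(l)} ⟨φ^τ,ψ^τ⟩`, the inner products on the right taken in the links. -/
theorem restriction_of_inner_product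
    (X : SComplex V) (n : ℕ) (m : Finset V → ℝ)
    (hpure : X.Pure n) (hm : X.IsBalanced n m)
    (k : ℕ) (hk : k ≤ n - 1) (l : ℕ) (hl : k + l + 1 ≤ n)
    (φ ψ : (Fin (k + 1) → V) → ℝ) (hφ : X.IsForm (k + 1) φ) (hψ : X.IsForm (k + 1) ψ) :
    X.innerF m (k + 1) φ ψ =
      X.sumOSimp (l + 1) fun τ =>
        (X.link (Finset.image τ Finset.univ)).innerF
          (linkWt m (Finset.image τ Finset.univ)) (k + 1)
          ((X.link (Finset.image τ Finset.univ)).restrict φ)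
          ((X.link (Finset.image τ Finset.univ)).restrict ψ) :=
  restriction_of_inner_product_general X n m hm k l hl φ ψ
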